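/- arXiv:1201.4523 — 4 statements merged into one kernel-verified Lean document; each statement's English description precedes it below -/
import Mathlib

section
/- Let q be a prime power. The group G_O of collineations of PG(3,q²) induced by the matrices M_A = diag(A,1) with A ∈ GU₃(q) acts transitively on the set of Baer subgenerators of H(3,q²) that have a point in the Hermitian curve O: for any two Baer subgenerators b, b' each containing a point of O, there exists A ∈ GU₃(q) with M_A(b) = b'. -/
open Projectivization Module Matrix

-- incidence graph & generalised hexagon
def IncGraph {P L : Type*} (I : P → L → Prop) : SimpleGraph (P ⊕ L) :=
  SimpleGraph.fromRel (fun a b =>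
    match a, b with
    | Sum.inl p, Sum.inr l => I p l
    | _, _ => False)

/-- A point-line incidence structure is a generalised hexagon of order `(s,t)` if every line has
`s+1` points, every point is on `t+1` lines, and the bipartite incidence graph is connected with
diameter 6 and girth 12. -/
def IsGenHexagon {P L : Type*} (I : P → L → Prop) (s t : ℕ) : Prop :=
  (∀ l : L, Nat.card {p : P // I p l} = s + 1) ∧
  (∀ p : P, Nat.card {l : L // I p l} = t + 1) ∧
  (IncGraph I).Connected ∧ (IncGraph I).diam = 6 ∧ (IncGraph I).girth = 12

-- Hermitian model
abbrev PG3 (F : Type*) [Field F] := Projectivization F (Fin 4 → F)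

def herm (q : ℕ) {F : Type*} [Field F] (x y : Fin 4 → F) : F := ∑ i, x i * (y i) ^ q

def HermPts (q : ℕ) (F : Type*) [Field F] : Set (PG3 F) := {P | herm q P.rep P.rep = 0}

def OCurve (q : ℕ) (F : Type*) [Field F] : Set (PG3 F) :=
  {P | P ∈ HermPts q F ∧ P.rep 3 = 0}

def AffPts (q : ℕ) (F : Type*) [Field F] : Set (PG3 F) :=
  {P | P ∈ HermPts q F ∧ P.rep 3 ≠ 0}

def IsGenerator (q : ℕ) {F : Type*} [Field F] (W : Submodule F (Fin 4 → F)) : Prop :=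
  finrank F W = 2 ∧ ∀ x ∈ W, ∀ y ∈ W, herm q x y = 0

def IsBaerSubline (q : ℕ) {F : Type*} [Field F] (s : Set (PG3 F)) : Prop :=
  ∃ v w : Fin 4 → F, LinearIndependent F ![v, w] ∧
    s = {P | ∃ a b : F, a ^ q = a ∧ b ^ q = b ∧
          a • v + b • w ≠ 0 ∧ a • v + b • w ∈ P.submodule}

def IsBaerSubgenerator (q : ℕ) {F : Type*} [Field F] (s : Set (PG3 F)) : Prop :=
  IsBaerSubline q s ∧ ∃ W : Submodule F (Fin 4 → F), IsGenerator q W ∧ ∀ P ∈ s, P.rep ∈ W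

def IsBaerSubplane (q : ℕ) {F : Type*} [Field F] (s : Set (PG3 F)) : Prop :=
  ∃ u v w : Fin 4 → F, LinearIndependent F ![u, v, w] ∧
    s = {P | ∃ a b c : F, a ^ q = a ∧ b ^ q = b ∧ c ^ q = c ∧
          a • u + b • v + c • w ≠ 0 ∧ a • u + b • v + c • w ∈ P.submodule}

/-- `GU₃(q)`: matrices with `A ⬝ (A^(q))ᵀ = 1`. -/
def IsGU3 (q : ℕ) {F : Type*} [Field F] (A : Matrix (Fin 3) (Fin 3) F) : Prop :=
  A * (A.map (· ^ q))ᵀ = 1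

/-- The 4×4 block matrix `diag(A,1)`. -/
def MA {F : Type*} [Field F] (A : Matrix (Fin 3) (Fin 3) F) : Matrix (Fin 4) (Fin 4) F :=
  Matrix.of fun i j =>
    if hi : (i : ℕ) < 3 then
      if hj : (j : ℕ) < 3 then A ⟨i, hi⟩ ⟨j, hj⟩ else 0
    else if (j : ℕ) < 3 then 0 else 1

/-- Image of a set of points of `PG(3,q²)` under the collineation induced by an invertible
matrix `M`. -/
def matImage {F : Type*} [Field F] (M : Matrix (Fin 4) (Fin 4) F) (s : Set (PG3 F)) :
    Set (PG3 F) :=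
  {P' | ∃ P ∈ s, M.mulVec P.rep ≠ 0 ∧ M.mulVec P.rep ∈ P'.submodule}

open scoped Pointwise

/-!
Write `x̄ = x ^ q`, the involution of `GF(q²)` with fixed field `GF(q)`. A Baer subgenerator `b`
meeting `O` consists of the points of a `GF(q)`-span `⟨v, w⟩`, where `v` is its point on `O`.
Since the Hermitian curve contains no line, the generator through `b` is not contained in
`X₃ = 0`, so `w` can be chosen with `w₃ = 1`. The truncations `(v₀, v₁, v₂)` and
`(w₀, w₁, w₂)` are then an isotropic vector and an orthogonal vector of norm `-1` in `GF(q²)³`.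
Because the trace `d ↦ d + d̄` maps onto `GF(q)`, they extend to a basis with the fixed Gram matrix
`!![0, 0, 1; 0, -1, 0; 1, 0, 0]`. Two bases with the same Gram matrix differ by a unitary matrix
`A`, and `diag(A, 1)` then maps `v, w` to `v', w'`, hence `b` to `b'`.
-/

section FiniteField

variable {q : ℕ} {F : Type*} [Field F] [Fintype F]

theorem add_pow_of_card_eq_sq (hq : IsPrimePow q) (hF : Fintype.card F = q ^ 2) (x y : F) :
    (x + y) ^ q = x ^ q + y ^ q := by
  obtain ⟨p, k, hp, -, rfl⟩ := hq
  have hp := Nat.prime_iff.mpr hp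
  have : Fact p.Prime := ⟨hp⟩
  have : CharP F p := by
    rw [CharP.charP_iff_prime_eq_zero hp]
    have h := FiniteField.cast_card_eq_zero F
    rw [hF] at h
    exact eq_zero_of_pow_eq_zero (eq_zero_of_pow_eq_zero (by exact_mod_cast h))
  exact add_pow_char_pow x y p k

theorem pow_pow_of_card_eq_sq (hF : Fintype.card F = q ^ 2) (x : F) : (x ^ q) ^ q = x := by
  rw [← pow_mul, ← sq, ← hF, FiniteField.pow_card]

theorem exists_add_pow_ne_zero (hq : 2 ≤ q) (hF : Fintype.card F = q ^ 2) :
    ∃ e : F, e + e ^ q ≠ 0 := by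
  open Polynomial in
  by_contra! h
  have hdeg : (X ^ q + X : F[X]).natDegree = q := by
    rw [natDegree_add_eq_left_of_natDegree_lt] <;> simp; omega
  have hroots : (Finset.univ : Finset F).val ⊆ (X ^ q + X : F[X]).roots := by
    intro e _
    rw [mem_roots (by intro h0; simp [h0] at hdeg; omega)]
    simp [add_comm, h e]
  have := card_le_degree_of_subset_roots hroots
  rw [Finset.card_univ, hF, hdeg] at this
  nlinarith

end FiniteField

abbrev starRingOfPow {q : ℕ} {F : Type*} [Field F]
    (hadd : ∀ x y : F, (x + y) ^ q = x ^ q + y ^ q) (hinv : ∀ x : F, (x ^ q) ^ q = x) :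
    StarRing F where
  star x := x ^ q
  star_involutive := hinv
  star_mul x y := by simp only [mul_pow, mul_comm]
  star_add := hadd

section HermitianSpace

variable {K : Type*} [Field K] [StarRing K]

theorem exists_add_star_eq {e : K} (he : e + star e ≠ 0) {r : K} (hr : star r = r) :
    ∃ d : K, d + star d = r := by
  refine ⟨r * e / (e + star e), ?_⟩
  rw [star_div₀, star_mul', star_add, star_star, hr, add_comm (star e), ← add_div]
  field_simp

/-- The span of the `x i` lies in the kernel of the matrix with rows `star (x i)`, which has full
row rank. -/
theorem two_mul_card_le_of_isotropic {ι m : Type*} [Fintype ι] [Fintype m] {x : ι → m → K}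
    (hx : LinearIndependent K x) (hiso : ∀ i j, x i ⬝ᵥ star (x j) = 0) :
    2 * Fintype.card ι ≤ Fintype.card m := by
  set M : Matrix ι m K := Matrix.of fun i => star (x i)
  have hrows : LinearIndependent K fun i => star (x i) := by
    rw [Fintype.linearIndependent_iff] at hx ⊢
    intro g hg i
    have h := congrArg star hg
    simp only [star_sum, star_smul, star_zero, star_star] at h
    simpa using hx (star g) h i
  have hrank : M.rank = Fintype.card ι := by
    rw [M.rank_eq_finrank_span_row]
    exact finrank_span_eq_card hrows
  have hker : Fintype.card ι ≤ finrank K (LinearMap.ker M.mulVecLin) := by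
    rw [← finrank_span_eq_card hx]
    refine Submodule.finrank_mono (Submodule.span_le.mpr ?_)
    rintro _ ⟨j, rfl⟩
    ext i
    change star (x i) ⬝ᵥ x j = 0
    rw [dotProduct_comm]
    exact hiso j i
  have := LinearMap.finrank_range_add_finrank_ker M.mulVecLin
  rw [← Matrix.rank, hrank, Module.finrank_fintype_fun_eq_card] at this
  omega

theorem exists_hyperbolic_partner {n : Type*} [Fintype n] [DecidableEq n]
    (htr : ∀ r : K, star r = r → ∃ d : K, d + star d = r) {p w : n → K} (hp : p ≠ 0)
    (hpp : p ⬝ᵥ star p = 0) (hpw : p ⬝ᵥ star w = 0) (hww : w ⬝ᵥ star w ≠ 0) :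
    ∃ u : n → K, p ⬝ᵥ star u = 1 ∧ w ⬝ᵥ star u = 0 ∧ u ⬝ᵥ star u = 0 := by
  obtain ⟨i, hi⟩ := Function.ne_iff.mp hp
  set u₀ : n → K := star (Pi.single i (p i)⁻¹)
  set u₁ : n → K := u₀ - star ((w ⬝ᵥ star u₀) / (w ⬝ᵥ star w)) • w
  have hpu₁ : p ⬝ᵥ star u₁ = 1 := by
    simpa [u₁, u₀, dotProduct_sub, dotProduct_smul, hpw, star_smul] using mul_inv_cancel₀ hi
  have hwu₁ : w ⬝ᵥ star u₁ = 0 := by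
    simp [u₁, dotProduct_sub, dotProduct_smul, star_smul, hww]
  have hwp : w ⬝ᵥ star p = 0 := by rw [dotProduct_star, hpw, star_zero]
  -- adding `d • p` to `u₁` changes its norm by the trace `d + star d`
  obtain ⟨d, hd⟩ := htr (-(u₁ ⬝ᵥ star u₁)) (by rw [star_neg, ← dotProduct_star])
  refine ⟨u₁ + d • p, ?_, ?_, ?_⟩
  · simp [dotProduct_add, dotProduct_smul, star_smul, hpu₁, hpp]
  · simp [dotProduct_add, dotProduct_smul, star_smul, hwu₁, hwp]
  · have hu₁p : u₁ ⬝ᵥ star p = 1 := by rw [dotProduct_star, hpu₁, star_one]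
    simp [dotProduct_add, add_dotProduct, dotProduct_smul, smul_dotProduct, star_smul, hpu₁,
      hu₁p, hpp]
    linear_combination hd

end HermitianSpace

theorem exists_mul_conjTranspose_eq_one_of_gram {R n : Type*} [CommRing R] [StarRing R]
    [Fintype n] [DecidableEq n] {B B' G : Matrix n n R} (hB : Bᴴ * B = G) (hB' : B'ᴴ * B' = G)
    (hG : G * G = 1) : ∃ A : Matrix n n R, A * Aᴴ = 1 ∧ A * B = B' := by
  have hGh : Gᴴ = G := by rw [← hB, conjTranspose_mul, conjTranspose_conjTranspose]
  have hB'inv : B' * (G * B'ᴴ) = 1 := mul_eq_one_comm.mp (by rw [mul_assoc, hB', hG])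
  refine ⟨B' * G * Bᴴ, ?_, by rw [mul_assoc, hB, mul_assoc, hG, mul_one]⟩
  calc B' * G * Bᴴ * (B' * G * Bᴴ)ᴴ = B' * (G * (Bᴴ * B) * Gᴴ) * B'ᴴ := by
        simp only [conjTranspose_mul, conjTranspose_conjTranspose, mul_assoc]
    _ = 1 := by rw [hB, hG, one_mul, hGh, mul_assoc, hB'inv]

def hermGram (K : Type*) [Ring K] : Matrix (Fin 3) (Fin 3) K := !![0, 0, 1; 0, -1, 0; 1, 0, 0]

theorem hermGram_mul_self {K : Type*} [Ring K] : hermGram K * hermGram K = 1 := by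
  ext i j
  fin_cases i <;> fin_cases j <;> simp [hermGram, Matrix.mul_apply, Fin.sum_univ_three]

section HermitianPlane

variable {K : Type*} [Field K] [StarRing K]

theorem exists_conjTranspose_mul_self_eq_hermGram
    (htr : ∀ r : K, star r = r → ∃ d : K, d + star d = r) {p w : Fin 3 → K} (hp : p ≠ 0)
    (hpp : p ⬝ᵥ star p = 0) (hpw : p ⬝ᵥ star w = 0) (hww : w ⬝ᵥ star w = -1) :
    ∃ B : Matrix (Fin 3) (Fin 3) K,
      Bᴴ * B = hermGram K ∧ B *ᵥ Pi.single 0 1 = p ∧ B *ᵥ Pi.single 1 1 = w := by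
  obtain ⟨u, hpu, hwu, huu⟩ :=
    exists_hyperbolic_partner htr hp hpp hpw (by rw [hww]; exact neg_ne_zero.mpr one_ne_zero)
  have hwp : w ⬝ᵥ star p = 0 := by rw [dotProduct_star, hpw, star_zero]
  have hup : u ⬝ᵥ star p = 1 := by rw [dotProduct_star, hpu, star_one]
  have huw : u ⬝ᵥ star w = 0 := by rw [dotProduct_star, hwu, star_zero]
  set f := ![p, w, u]
  have hgram : ∀ i j, ((of f)ᵀᴴ * (of f)ᵀ) i j = f j ⬝ᵥ star (f i) := by
    intro i j
    simp [mul_apply, dotProduct, mul_comm]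
  refine ⟨(of f)ᵀ, ?_, by simp [f], by simp [f]⟩
  ext i j
  rw [hgram]
  fin_cases i <;> fin_cases j <;> simp [f, hermGram, hpp, hpw, hww, hpu, hwu, huu, hwp, hup, huw]

theorem exists_unitary_mulVec_eq
    (htr : ∀ r : K, star r = r → ∃ d : K, d + star d = r) {p w p' w' : Fin 3 → K}
    (hp : p ≠ 0) (hpp : p ⬝ᵥ star p = 0) (hpw : p ⬝ᵥ star w = 0) (hww : w ⬝ᵥ star w = -1)
    (hp' : p' ≠ 0) (hpp' : p' ⬝ᵥ star p' = 0) (hpw' : p' ⬝ᵥ star w' = 0)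
    (hww' : w' ⬝ᵥ star w' = -1) :
    ∃ A : Matrix (Fin 3) (Fin 3) K, A * Aᴴ = 1 ∧ A *ᵥ p = p' ∧ A *ᵥ w = w' := by
  obtain ⟨B, hB, hBp, hBw⟩ := exists_conjTranspose_mul_self_eq_hermGram htr hp hpp hpw hww
  obtain ⟨B', hB', hBp', hBw'⟩ :=
    exists_conjTranspose_mul_self_eq_hermGram htr hp' hpp' hpw' hww'
  obtain ⟨A, hA, hAB⟩ := exists_mul_conjTranspose_eq_one_of_gram hB hB' hermGram_mul_self
  refine ⟨A, hA, ?_, ?_⟩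
  · rw [← hBp, mulVec_mulVec, hAB, hBp']
  · rw [← hBw, mulVec_mulVec, hAB, hBw']

end HermitianPlane

section LinearAlgebra

variable {K V : Type*} [Field K] [AddCommGroup V] [Module K V]

theorem linearIndependent_pair_or_of_ne_zero {x v w : V} (hvw : LinearIndependent K ![v, w])
    (hx : x ≠ 0) : LinearIndependent K ![x, v] ∨ LinearIndependent K ![x, w] := by
  simp only [LinearIndependent.pair_iff' hx]
  by_contra! h
  obtain ⟨⟨a, rfl⟩, ⟨b, rfl⟩⟩ := h
  obtain ⟨-, ha⟩ := LinearIndependent.pair_iff.mp hvw b (-a) (by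
    rw [smul_smul, smul_smul, mul_comm, neg_mul, neg_smul, add_neg_cancel])
  exact hvw.ne_zero 0 (by simp [neg_eq_zero.mp ha])

theorem span_pair_eq_of_linearIndependent {x y v w : V} (hxy : LinearIndependent K ![x, y])
    (hx : x ∈ Submodule.span K {v, w}) (hy : y ∈ Submodule.span K {v, w}) :
    Submodule.span K {x, y} = Submodule.span K {v, w} := by
  have : FiniteDimensional K (Submodule.span K {v, w}) :=
    FiniteDimensional.span_of_finite K (Set.toFinite _)
  refine Submodule.eq_of_le_of_finrank_le (Submodule.span_le.mpr (Set.pair_subset hx hy)) ?_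
  have h₁ := finrank_span_eq_card hxy
  have h₂ := finrank_range_le_card (R := K) ![v, w]
  rw [range_cons_cons_empty] at h₁ h₂
  rw [Set.finrank] at h₂
  simp only [Fintype.card_fin] at h₁ h₂
  omega

theorem LinearIndependent.fin_init {ι : Type*} [Fintype ι] {n : ℕ} {x : ι → Fin (n + 1) → K}
    (hx : LinearIndependent K x) (hlast : ∀ i, x i (Fin.last n) = 0) :
    LinearIndependent K fun i => Fin.init (x i) := by
  rw [Fintype.linearIndependent_iff] at hx ⊢
  intro g hg
  refine hx g (funext fun j => ?_)
  induction j using Fin.lastCases with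
  | last => simp [hlast]
  | cast j => simpa [Fin.init] using congrFun hg j

end LinearAlgebra


def selfAdjointSubfield (F : Type*) [Field F] [StarRing F] : Subfield F :=
  (starRingEnd F).eqLocusField (RingHom.id F)

section Points

variable {K V : Type*} [Field K] [AddCommGroup V] [Module K V]

variable (K) in
def pointsIn (S : Set V) : Set (Projectivization K V) := {P | ∃ x ∈ S, x ≠ 0 ∧ x ∈ P.submodule}

theorem pointsIn_smul {μ : K} (hμ : μ ≠ 0) (S : Set V) : pointsIn K (μ • S) = pointsIn K S := by
  ext P
  constructor
  · rintro ⟨_, ⟨x, hx, rfl⟩, hne, hmem⟩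
    exact ⟨x, hx, right_ne_zero_of_smul hne, (Submodule.smul_mem_iff _ hμ).mp hmem⟩
  · rintro ⟨x, hx, hne, hmem⟩
    exact ⟨μ • x, Set.smul_mem_smul_set hx, smul_ne_zero hμ hne, P.submodule.smul_mem μ hmem⟩

theorem subset_of_forall_rep_mem {S : Set V} {W : Submodule K V}
    (h : ∀ P ∈ pointsIn K S, P.rep ∈ W) : S ⊆ W := by
  intro x hx
  by_cases hx0 : x = 0
  · simp [hx0]
  have hxP : x ∈ (mk K x hx0).submodule := by simp [submodule_mk, Submodule.mem_span_singleton_self]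
  have hrep := h _ ⟨x, hx, hx0, hxP⟩
  rw [submodule_eq, Submodule.mem_span_singleton] at hxP
  obtain ⟨t, ht⟩ := hxP
  exact ht ▸ W.smul_mem t hrep

theorem setOf_fixed_combination_eq_pointsIn {q : ℕ} {F : Type*} [Field F] [StarRing F]
    [Module F V] (hstar : ∀ x : F, star x = x ^ q) (v w : V) :
    {P : Projectivization F V | ∃ a b : F, a ^ q = a ∧ b ^ q = b ∧ a • v + b • w ≠ 0 ∧
      a • v + b • w ∈ P.submodule} =
      pointsIn F (Submodule.span (selfAdjointSubfield F) {v, w} : Set V) := by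
  ext P
  simp only [pointsIn, Set.mem_ofPred_eq, SetLike.mem_coe, Submodule.mem_span_pair]
  constructor
  · rintro ⟨a, b, ha, hb, hne, hmem⟩
    exact ⟨_, ⟨⟨a, (hstar a).trans ha⟩, ⟨b, (hstar b).trans hb⟩, rfl⟩, hne, hmem⟩
  · rintro ⟨_, ⟨a, b, rfl⟩, hne, hmem⟩
    exact ⟨a, b, (hstar a).symm.trans a.2, (hstar b).symm.trans b.2, hne, hmem⟩

end Points

section MatImage

variable {F : Type*} [Field F]

theorem matImage_pointsIn (M : Matrix (Fin 4) (Fin 4) F) (S : Set (Fin 4 → F))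
    (hM : ∀ x ∈ S, M *ᵥ x = 0 → x = 0) :
    matImage M (pointsIn F S) = pointsIn F ((M *ᵥ ·) '' S) := by
  ext P'
  constructor
  · rintro ⟨P, ⟨x, hxS, hx0, hxP⟩, -, hMP⟩
    rw [submodule_eq, Submodule.mem_span_singleton] at hxP
    obtain ⟨t, rfl⟩ := hxP
    refine ⟨M *ᵥ (t • P.rep), ⟨_, hxS, rfl⟩, fun h => hx0 (hM _ hxS h), ?_⟩
    rw [mulVec_smul]
    exact P'.submodule.smul_mem t hMP
  · rintro ⟨_, ⟨x, hxS, rfl⟩, hne, hmem⟩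
    have hx0 : x ≠ 0 := by rintro rfl; simp at hne
    obtain ⟨u, hu⟩ := (mk_eq_mk_iff F _ _ (rep_nonzero _) hx0).mp (mk_rep (mk F x hx0))
    refine ⟨mk F x hx0, ⟨x, hxS, hx0, by simp [submodule_mk, Submodule.mem_span_singleton_self]⟩,
      ?_, ?_⟩
    · rw [← hu, Units.smul_def, mulVec_smul]
      exact smul_ne_zero u.ne_zero hne
    · rw [← hu, Units.smul_def, mulVec_smul]
      exact P'.submodule.smul_mem _ hmem

theorem matImage_pointsIn_span_pair (K : Subfield F) {M : Matrix (Fin 4) (Fin 4) F}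
    {v w v' w' : Fin 4 → F} (hvw' : LinearIndependent F ![v', w']) (hv : M *ᵥ v = v')
    (hw : M *ᵥ w = w') :
    matImage M (pointsIn F (Submodule.span K {v, w})) =
      pointsIn F (Submodule.span K {v', w'}) := by
  rw [matImage_pointsIn]
  · let f := M.mulVecLin.restrictScalars K
    rw [show (M *ᵥ ·) = f from rfl, ← Submodule.map_coe, Submodule.map_span, Set.image_pair]
    simp [f, hv, hw]
  · intro x hx hMx
    obtain ⟨a, b, rfl⟩ := Submodule.mem_span_pair.mp (Submodule.span_le_restrictScalars K F _ hx)
    rw [mulVec_add, mulVec_smul, mulVec_smul, hv, hw] at hMx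
    obtain ⟨rfl, rfl⟩ := LinearIndependent.pair_iff.mp hvw' a b hMx
    simp

end MatImage

section PG3

variable {q : ℕ} {F : Type*} [Field F]

theorem herm_eq_init_add [StarRing F] (hstar : ∀ x : F, star x = x ^ q) (x y : Fin 4 → F) :
    herm q x y = Fin.init x ⬝ᵥ star (Fin.init y) + x 3 * star (y 3) := by
  simp [herm, dotProduct, Fin.sum_univ_castSucc, Fin.init, hstar]

theorem MA_mulVec (A : Matrix (Fin 3) (Fin 3) F) (x : Fin 4 → F) :
    MA A *ᵥ x = Fin.snoc (A *ᵥ Fin.init x) (x 3) := by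
  ext i
  fin_cases i <;> simp [MA, mulVec, dotProduct, Fin.sum_univ_four, Fin.sum_univ_three, Fin.snoc,
    Fin.init]
  rfl

theorem isGU3_of_mul_conjTranspose [StarRing F] (hstar : ∀ x : F, star x = x ^ q)
    {A : Matrix (Fin 3) (Fin 3) F} (hA : A * Aᴴ = 1) : IsGU3 q A := by
  rwa [conjTranspose, transpose_map, show (star : F → F) = (· ^ q) from funext hstar] at hA

/-- `v` spans the point of a Baer subgenerator on `O` and `w` is a point of it off the plane
`X₃ = 0`, scaled so that `w 3 = 1`. -/
structure IsAdaptedPair (q : ℕ) (v w : Fin 4 → F) : Prop where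
  ne_zero : v ≠ 0
  left_three : v 3 = 0
  right_three : w 3 = 1
  herm_left : herm q v v = 0
  herm_cross : herm q v w = 0
  herm_right : herm q w w = 0

variable {v w v' w' : Fin 4 → F}

theorem IsAdaptedPair.linearIndependent (h : IsAdaptedPair q v w) :
    LinearIndependent F ![v, w] := by
  rw [LinearIndependent.pair_iff]
  intro s t hst
  have ht : t = 0 := by simpa [h.left_three, h.right_three] using congrFun hst 3
  subst ht
  simpa [h.ne_zero] using hst

theorem IsAdaptedPair.init [StarRing F] (hstar : ∀ x : F, star x = x ^ q)
    (h : IsAdaptedPair q v w) :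
    Fin.init v ≠ 0 ∧ Fin.init v ⬝ᵥ star (Fin.init v) = 0 ∧
      Fin.init v ⬝ᵥ star (Fin.init w) = 0 ∧ Fin.init w ⬝ᵥ star (Fin.init w) = -1 := by
  have hvv := h.herm_left
  have hvw := h.herm_cross
  have hww := h.herm_right
  rw [herm_eq_init_add hstar, h.left_three] at hvv hvw
  rw [herm_eq_init_add hstar, h.right_three] at hww
  refine ⟨fun h0 => h.ne_zero ?_, by simpa using hvv, by simpa using hvw, ?_⟩
  · funext i
    induction i using Fin.lastCases with
    | last => exact h.left_three
    | cast j => exact congrFun h0 j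
  · simpa [add_eq_zero_iff_eq_neg] using hww

theorem IsAdaptedPair.exists_isGU3 [StarRing F] (hstar : ∀ x : F, star x = x ^ q)
    (htr : ∀ r : F, star r = r → ∃ d : F, d + star d = r)
    (h : IsAdaptedPair q v w) (h' : IsAdaptedPair q v' w') :
    ∃ A, IsGU3 q A ∧ MA A *ᵥ v = v' ∧ MA A *ᵥ w = w' := by
  obtain ⟨hp, hpp, hpw, hww⟩ := h.init hstar
  obtain ⟨hp', hpp', hpw', hww'⟩ := h'.init hstar
  obtain ⟨A, hA, hAv, hAw⟩ := exists_unitary_mulVec_eq htr hp hpp hpw hww hp' hpp' hpw' hww'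
  refine ⟨A, isGU3_of_mul_conjTranspose hstar hA, ?_, ?_⟩
  · rw [MA_mulVec, hAv, h.left_three, ← h'.left_three]
    exact Fin.snoc_init_self v'
  · rw [MA_mulVec, hAw, h.right_three, ← h'.right_three]
    exact Fin.snoc_init_self w'

theorem apply_three_ne_zero_of_isotropic [StarRing F] (hstar : ∀ x : F, star x = x ^ q)
    {W : Submodule F (Fin 4 → F)} (hW : ∀ a ∈ W, ∀ b ∈ W, herm q a b = 0) {x y : Fin 4 → F}
    (hxy : LinearIndependent F ![x, y]) (hxW : x ∈ W) (hyW : y ∈ W) (hx : x 3 = 0) :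
    y 3 ≠ 0 := by
  intro hy
  have hlast : ∀ i, ![x, y] i 3 = 0 := by simp [Fin.forall_fin_two, hx, hy]
  have hmem : ∀ i, ![x, y] i ∈ W := by simp [Fin.forall_fin_two, hxW, hyW]
  have := two_mul_card_le_of_isotropic (hxy.fin_init hlast) fun i j => by
    simpa [herm_eq_init_add hstar, hlast] using hW _ (hmem i) _ (hmem j)
  simp at this

theorem exists_isAdaptedPair [StarRing F] (hstar : ∀ x : F, star x = x ^ q) {b : Set (PG3 F)}
    (hb : IsBaerSubgenerator q b) (hbO : ∃ P ∈ b, P ∈ OCurve q F) :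
    ∃ v w : Fin 4 → F, IsAdaptedPair q v w ∧
      b = pointsIn F (Submodule.span (selfAdjointSubfield F) {v, w} : Set (Fin 4 → F)) := by
  obtain ⟨⟨v₀, w₀, hind, rfl⟩, W, ⟨-, hW⟩, hbW⟩ := hb
  rw [setOf_fixed_combination_eq_pointsIn hstar] at hbW hbO ⊢
  set S := Submodule.span (selfAdjointSubfield F) {v₀, w₀}
  have hSW : (S : Set (Fin 4 → F)) ⊆ W := subset_of_forall_rep_mem hbW
  obtain ⟨P, ⟨x, hxS, hx0, hxP⟩, -, hP3⟩ := hbO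
  have hx3 : x 3 = 0 := by
    rw [submodule_eq, Submodule.mem_span_singleton] at hxP
    obtain ⟨t, rfl⟩ := hxP
    simp [hP3]
  obtain ⟨y, hyS, hxy⟩ : ∃ y ∈ S, LinearIndependent F ![x, y] :=
    (linearIndependent_pair_or_of_ne_zero hind hx0).elim
      (fun h => ⟨v₀, Submodule.subset_span (by simp), h⟩)
      (fun h => ⟨w₀, Submodule.subset_span (by simp), h⟩)
  have hS : Submodule.span (selfAdjointSubfield F) {x, y} = S :=
    span_pair_eq_of_linearIndependent (hxy.restrict_scalars' _) hxS hyS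
  have hy3 := apply_three_ne_zero_of_isotropic hstar hW hxy (hSW hxS) (hSW hyS) hx3
  refine ⟨(y 3)⁻¹ • x, (y 3)⁻¹ • y, ⟨smul_ne_zero (inv_ne_zero hy3) hx0, by simp [hx3],
    by simp [hy3], ?_, ?_, ?_⟩, ?_⟩
  · exact hW _ (W.smul_mem _ (hSW hxS)) _ (W.smul_mem _ (hSW hxS))
  · exact hW _ (W.smul_mem _ (hSW hxS)) _ (W.smul_mem _ (hSW hyS))
  · exact hW _ (W.smul_mem _ (hSW hyS)) _ (W.smul_mem _ (hSW hyS))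
  · rw [← Set.smul_set_singleton, ← Set.smul_set_insert, ← Submodule.smul_span,
      Submodule.coe_pointwise_smul, pointsIn_smul (inv_ne_zero hy3), hS]

end PG3

/-- `G_O` acts transitively on Baer subgenerators with a point in `O`. -/
theorem statement_1 (q : ℕ) (hq : IsPrimePow q) (F : Type) [Field F] [Fintype F]
    (hF : Fintype.card F = q ^ 2)
    (b b' : Set (PG3 F))
    (hb : IsBaerSubgenerator q b) (hbO : ∃ P ∈ b, P ∈ OCurve q F)
    (hb' : IsBaerSubgenerator q b') (hb'O : ∃ P ∈ b', P ∈ OCurve q F) :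
    ∃ A : Matrix (Fin 3) (Fin 3) F, IsGU3 q A ∧ matImage (MA A) b = b' := by
  let _ : StarRing F := starRingOfPow (add_pow_of_card_eq_sq hq hF) (pow_pow_of_card_eq_sq hF)
  have hstar : ∀ x : F, star x = x ^ q := fun _ => rfl
  obtain ⟨e, he⟩ := exists_add_pow_ne_zero hq.two_le hF
  have htr : ∀ r : F, star r = r → ∃ d, d + star d = r := fun r hr => exists_add_star_eq he hr
  obtain ⟨v, w, hvw, rfl⟩ := exists_isAdaptedPair hstar hb hbO
  obtain ⟨v', w', hvw', rfl⟩ := exists_isAdaptedPair hstar hb' hb'O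
  obtain ⟨A, hA, hAv, hAw⟩ := hvw.exists_isGU3 hstar htr hvw'
  exact ⟨A, hA, matImage_pointsIn_span_pair _ hvw'.linearIndependent hAv hAw⟩
end

section
/- Let q be a prime power and let L be a set of lines of the parabolic quadric Q(6,q) such that every point X of Q(6,q) is incident with exactly q+1 lines of L, all contained in a common plane X* of Q(6,q), and suppose the concurrency graph of L is connected. Let Π be a hyperplane of PG(6,q) meeting Q(6,q) in a nondegenerate elliptic quadric Q⁻(5,q). Then the set S := { X* ∩ Π : X a point of Q⁻(5,q) } is a spread of Q⁻(5,q): its members are lines of Q⁻(5,q), any two distinct members are disjoint, and every point of Q⁻(5,q) lies on a member of S. -/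
open Projectivization Module Matrix

/-- Points of `PG(6,q)`. -/
abbrev PG6 (K : Type*) [Field K] := Projectivization K (Fin 7 → K)

/-- The (nondegenerate, Witt index 3) parabolic quadratic form on `GF(q)⁷`. -/
def Qf {K : Type*} [Field K] (x : Fin 7 → K) : K :=
  x 0 * x 0 + x 1 * x 2 + x 3 * x 4 + x 5 * x 6

/-- The polar form of `Qf`. -/
def Qpolar {K : Type*} [Field K] (x y : Fin 7 → K) : K := Qf (x + y) - Qf x - Qf y

/-- The points of the parabolic quadric `Q(6,q)`. -/
def QPts (K : Type*) [Field K] : Set (PG6 K) := {P | Qf P.rep = 0}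

/-- Lines of `Q(6,q)`: totally singular 2-dimensional subspaces. -/
def IsQLine {K : Type*} [Field K] (W : Submodule K (Fin 7 → K)) : Prop :=
  finrank K W = 2 ∧ ∀ x ∈ W, Qf x = 0

/-- Planes of `Q(6,q)`: totally singular 3-dimensional subspaces. -/
def IsQPlane {K : Type*} [Field K] (W : Submodule K (Fin 7 → K)) : Prop :=
  finrank K W = 3 ∧ ∀ x ∈ W, Qf x = 0

/-- The concurrency graph of a set of lines: two lines are adjacent when they are distinct and
share a point. -/
def ConcGraph {K : Type*} [Field K] (L : Set (Submodule K (Fin 7 → K))) :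
    SimpleGraph {W // W ∈ L} :=
  SimpleGraph.fromRel (fun W W' => W.val ⊓ W'.val ≠ ⊥)

/-- A hyperplane meeting `Q(6,q)` in a nondegenerate elliptic quadric `Q⁻(5,q)`: a 6-dimensional
subspace on which the restricted quadratic form is nondegenerate of Witt index 2. -/
def IsEllipticHyperplane {K : Type*} [Field K] (Hyp : Submodule K (Fin 7 → K)) : Prop :=
  finrank K Hyp = 6 ∧
  (∀ x ∈ Hyp, Qf x = 0 → (∀ y ∈ Hyp, Qpolar x y = 0) → x = 0) ∧
  (∃ W : Submodule K (Fin 7 → K), IsQLine W ∧ W ≤ Hyp) ∧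
  (∀ W : Submodule K (Fin 7 → K), IsQPlane W → ¬ W ≤ Hyp)

/-! For a point `X` of `Q⁻(5,q)`, the plane `X*` meets `Π` in a line, since `Π` contains no
plane of the quadric. The `q + 1` lines of `L` through `X` lie in `X*`, which contains only
`q + 1` lines through `X`; so `X* ∩ Π` is itself a line of `L`. If `X* ∩ Π` and `Y* ∩ Π` share a
point `Z`, they are two lines of `L` through `Z` inside `Π`, hence both equal the line `Z* ∩ Π`. -/

section LinearAlgebra

variable {K M : Type*} [Field K] [AddCommGroup M] [Module K M]

lemma ncard_setOf_le_finrank_eq_one (P : Submodule K M) :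
    {H : Submodule K M | H ≤ P ∧ finrank K H = 1}.ncard = Nat.card (Projectivization K P) := by
  rw [← Nat.card_coe_set_eq, Nat.card_congr (Projectivization.equivSubmodule K P)]
  symm
  refine Nat.card_congr (((Submodule.MapSubtype.orderIso P).toEquiv.subtypeEquiv
    fun H => ?_).trans (Equiv.subtypeSubtypeEquivSubtypeInter _ _))
  change _ ↔ finrank K (H.map P.subtype) = 1
  rw [Submodule.finrank_map_subtype_eq]

lemma eq_span_singleton_sup_inf_of_isCompl {v : M} {C W : Submodule K M}
    (hC : IsCompl (K ∙ v) C) (hvW : v ∈ W) : W = (K ∙ v) ⊔ C ⊓ W := by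
  rw [← sup_inf_assoc_of_le C ((Submodule.span_singleton_le_iff_mem v W).mpr hvW),
    hC.sup_eq_top, top_inf_eq]

variable [FiniteDimensional K M]

lemma finrank_inf_add_one_of_not_le {H π : Submodule K M} (hH : finrank K H + 1 = finrank K M)
    (hπ : ¬ π ≤ H) : finrank K ↥(π ⊓ H) + 1 = finrank K π := by
  have hlt : finrank K H < finrank K ↥(π ⊔ H) :=
    Submodule.finrank_lt_finrank_of_lt (lt_of_le_of_ne le_sup_right fun h => hπ (h ▸ le_sup_left))
  have hle := Submodule.finrank_le (π ⊔ H)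
  have := Submodule.finrank_sup_add_finrank_inf_eq π H
  omega

lemma finrank_inf_add_one_of_isCompl {v : M} (hv : v ≠ 0) {C W : Submodule K M}
    (hC : IsCompl (K ∙ v) C) (hvW : v ∈ W) : finrank K ↥(C ⊓ W) + 1 = finrank K W := by
  have hdisj : (K ∙ v) ⊓ (C ⊓ W) = ⊥ :=
    eq_bot_iff.mpr (hC.inf_eq_bot ▸ inf_le_inf_left _ inf_le_left)
  have := Submodule.finrank_sup_add_finrank_inf_eq (K ∙ v) (C ⊓ W)
  rw [← eq_span_singleton_sup_inf_of_isCompl hC hvW, hdisj, finrank_bot,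
    finrank_span_singleton hv] at this
  omega

lemma ncard_setOf_lines_through_le [Finite K] {π : Submodule K M} (hπ : finrank K π = 3)
    {v : M} (hv : v ≠ 0) (hvπ : v ∈ π) :
    {W : Submodule K M | W ≤ π ∧ finrank K W = 2 ∧ v ∈ W}.ncard ≤ Nat.card K + 1 := by
  have : Finite M := Module.finite_of_finite K
  obtain ⟨C, hC⟩ := (K ∙ v).exists_isCompl
  have hP : finrank K ↥(C ⊓ π) = 2 := by
    have := finrank_inf_add_one_of_isCompl hv hC hvπ
    omega
  calc _ ≤ {H : Submodule K M | H ≤ C ⊓ π ∧ finrank K H = 1}.ncard := by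
        refine Set.ncard_le_ncard_of_injOn (C ⊓ ·) ?_ ?_
        · rintro W ⟨hWπ, hW2, hvW⟩
          have := finrank_inf_add_one_of_isCompl hv hC hvW
          exact ⟨inf_le_inf_left C hWπ, by omega⟩
        · rintro W₁ ⟨-, -, hvW₁⟩ W₂ ⟨-, -, hvW₂⟩ (h : C ⊓ W₁ = C ⊓ W₂)
          rw [eq_span_singleton_sup_inf_of_isCompl hC hvW₁,
            eq_span_singleton_sup_inf_of_isCompl hC hvW₂, h]
    _ = Nat.card K + 1 := by
        rw [ncard_setOf_le_finrank_eq_one, card_of_finrank_two K _ hP]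

/-- The `Nat.card K + 1` lines of `L` through `v` lie in `π`, which has no more lines through `v`;
so every line of `π` through `v`, in particular `π ⊓ H`, belongs to `L`. -/
lemma inf_mem_of_pencil [Finite K] {L : Set (Submodule K M)} (hL : ∀ W ∈ L, finrank K W = 2)
    {π H : Submodule K M} (hπ : finrank K π = 3) (hπH : finrank K ↥(π ⊓ H) = 2)
    {v : M} (hv : v ≠ 0) (hvH : v ∈ H) (hpencil : ∀ W ∈ L, v ∈ W → W ≤ π)
    (hcard : Nat.card {W // W ∈ L ∧ v ∈ W} = Nat.card K + 1) :
    v ∈ π ⊓ H ∧ π ⊓ H ∈ L := by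
  have : Finite M := Module.finite_of_finite K
  set A := {W | W ∈ L ∧ v ∈ W}
  have hA : A.ncard = Nat.card K + 1 := by rwa [← Nat.card_coe_set_eq]
  obtain ⟨W₀, hW₀L, hvW₀⟩ : A.Nonempty := Set.nonempty_of_ncard_ne_zero (by omega)
  have hvπ : v ∈ π := hpencil W₀ hW₀L hvW₀ hvW₀
  have hAT : A = {W | W ≤ π ∧ finrank K W = 2 ∧ v ∈ W} :=
    Set.eq_of_subset_of_ncard_le (fun W ⟨hWL, hvW⟩ => ⟨hpencil W hWL hvW, hL W hWL, hvW⟩)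
      (hA ▸ ncard_setOf_lines_through_le hπ hv hvπ)
  have hπHA : π ⊓ H ∈ A := hAT ▸ ⟨inf_le_left, hπH, hvπ, hvH⟩
  exact ⟨⟨hvπ, hvH⟩, hπHA.1⟩

end LinearAlgebra

section Quadric

variable {K : Type*} [Field K]

lemma Qf_smul (c : K) (x : Fin 7 → K) : Qf (c • x) = c ^ 2 * Qf x := by
  simp only [Qf, Pi.smul_apply, smul_eq_mul]
  ring

lemma finrank_inf_of_isQPlane {Hyp π : Submodule K (Fin 7 → K)} (hHyp : IsEllipticHyperplane Hyp)
    (hπ : IsQPlane π) : finrank K ↥(π ⊓ Hyp) = 2 := by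
  have := finrank_inf_add_one_of_not_le (by rw [hHyp.1, finrank_fin_fun]) (hHyp.2.2.2 π hπ)
  rw [hπ.1] at this
  omega

lemma exists_plane_of_Qf_eq_zero {L : Set (Submodule K (Fin 7 → K))}
    (hstar : ∀ P ∈ QPts K, ∃ π, IsQPlane π ∧ ∀ W ∈ L, P.rep ∈ W → W ≤ π)
    {x : Fin 7 → K} (hx0 : x ≠ 0) (hx : Qf x = 0) :
    ∃ π, IsQPlane π ∧ ∀ W ∈ L, x ∈ W → W ≤ π := by
  obtain ⟨a, ha⟩ := exists_smul_eq_mk_rep K x hx0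
  have hXQ : mk K x hx0 ∈ QPts K := by
    change Qf (mk K x hx0).rep = 0
    rw [← ha, Units.smul_def, Qf_smul, hx, mul_zero]
  obtain ⟨π, hπ, hXπ⟩ := hstar _ hXQ
  exact ⟨π, hπ, fun W hWL hxW => hXπ W hWL (ha ▸ (W.smul_mem_iff' a).mpr hxW)⟩

end Quadric

theorem statement_8_general (q : ℕ) (K : Type) [Field K] [Fintype K]
    (hK : Fintype.card K = q)
    (L : Set (Submodule K (Fin 7 → K)))
    (hL : ∀ W ∈ L, IsQLine W)
    (hpencil : ∀ P ∈ QPts K,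
      Nat.card {W : Submodule K (Fin 7 → K) // W ∈ L ∧ P.rep ∈ W} = q + 1 ∧
      ∃ π : Submodule K (Fin 7 → K), IsQPlane π ∧ ∀ W ∈ L, P.rep ∈ W → W ≤ π)
    (Hyp : Submodule K (Fin 7 → K)) (hHyp : IsEllipticHyperplane Hyp)
    (S : Set (Submodule K (Fin 7 → K)))
    (hS : S = {W | ∃ (X : PG6 K) (π : Submodule K (Fin 7 → K)),
      X ∈ QPts K ∧ X.rep ∈ Hyp ∧ IsQPlane π ∧ (∀ l ∈ L, X.rep ∈ l → l ≤ π) ∧ W = π ⊓ Hyp}) :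
    (∀ W ∈ S, finrank K W = 2 ∧ (∀ x ∈ W, Qf x = 0) ∧ W ≤ Hyp) ∧
    (∀ W₁ ∈ S, ∀ W₂ ∈ S, W₁ = W₂ ∨ W₁ ⊓ W₂ = ⊥) ∧
    (∀ P ∈ QPts K, P.rep ∈ Hyp → ∃ W ∈ S, P.rep ∈ W) := by
  subst hS hK
  rw [← Nat.card_eq_fintype_card] at hpencil
  have hL2 : ∀ W ∈ L, finrank K W = 2 := fun W hW => (hL W hW).1
  have hline : ∀ π, IsQPlane π → finrank K ↥(π ⊓ Hyp) = 2 :=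
    fun _ => finrank_inf_of_isQPlane hHyp
  have hmem : ∀ (X : PG6 K) π, X ∈ QPts K → X.rep ∈ Hyp → IsQPlane π →
      (∀ W ∈ L, X.rep ∈ W → W ≤ π) → X.rep ∈ π ⊓ Hyp ∧ π ⊓ Hyp ∈ L :=
    fun X π hX hXH hπ hXπ =>
      inf_mem_of_pencil hL2 hπ.1 (hline π hπ) X.rep_nonzero hXH hXπ (hpencil X hX).1
  refine ⟨?_, ?_, ?_⟩
  · rintro _ ⟨X, π, -, -, hπ, -, rfl⟩
    exact ⟨hline π hπ, fun x hx => hπ.2 x hx.1, inf_le_right⟩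
  · rintro _ ⟨X₁, π₁, hX₁, hX₁H, hπ₁, hX₁π, rfl⟩ _ ⟨X₂, π₂, hX₂, hX₂H, hπ₂, hX₂π, rfl⟩
    refine or_iff_not_imp_right.mpr fun hne => ?_
    obtain ⟨x, ⟨hx₁, hx₂⟩, hx0⟩ := (Submodule.ne_bot_iff _).mp hne
    obtain ⟨π, hπ, hxπ⟩ :=
      exists_plane_of_Qf_eq_zero (fun P hP => (hpencil P hP).2) hx0 (hπ₁.2 x hx₁.1)
    have hcommon : ∀ W ∈ L, x ∈ W → W ≤ Hyp → W = π ⊓ Hyp := fun W hWL hxW hWH =>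
      Submodule.eq_of_le_of_finrank_eq (le_inf (hxπ W hWL hxW) hWH)
        ((hL2 W hWL).trans (hline π hπ).symm)
    rw [hcommon _ (hmem X₁ π₁ hX₁ hX₁H hπ₁ hX₁π).2 hx₁ inf_le_right,
      hcommon _ (hmem X₂ π₂ hX₂ hX₂H hπ₂ hX₂π).2 hx₂ inf_le_right]
  · intro P hP hPH
    obtain ⟨-, π, hπ, hPπ⟩ := hpencil P hP
    exact ⟨π ⊓ Hyp, ⟨P, π, hP, hPH, hπ, hPπ, rfl⟩, (hmem P π hP hPH hπ hPπ).1⟩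

/-- With `L` as before and the concurrency graph of `L` connected, the
intersections of the planes `X*` (for `X` ranging over the points of an elliptic hyperplane
section `Q⁻(5,q)`) with the hyperplane form a spread of `Q⁻(5,q)`. -/
theorem statement_8 (q : ℕ) (hq : IsPrimePow q) (K : Type) [Field K] [Fintype K]
    (hK : Fintype.card K = q)
    (L : Set (Submodule K (Fin 7 → K)))
    (hL : ∀ W ∈ L, IsQLine W)
    (hpencil : ∀ P ∈ QPts K,
      Nat.card {W : Submodule K (Fin 7 → K) // W ∈ L ∧ P.rep ∈ W} = q + 1 ∧
      ∃ π : Submodule K (Fin 7 → K), IsQPlane π ∧ ∀ W ∈ L, P.rep ∈ W → W ≤ π)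
    (hconn : (ConcGraph L).Connected)
    (Hyp : Submodule K (Fin 7 → K)) (hHyp : IsEllipticHyperplane Hyp)
    (S : Set (Submodule K (Fin 7 → K)))
    (hS : S = {W | ∃ (X : PG6 K) (π : Submodule K (Fin 7 → K)),
      X ∈ QPts K ∧ X.rep ∈ Hyp ∧ IsQPlane π ∧ (∀ l ∈ L, X.rep ∈ l → l ≤ π) ∧ W = π ⊓ Hyp}) :
    (∀ W ∈ S, finrank K W = 2 ∧ (∀ x ∈ W, Qf x = 0) ∧ W ≤ Hyp) ∧
    (∀ W₁ ∈ S, ∀ W₂ ∈ S, W₁ = W₂ ∨ W₁ ⊓ W₂ = ⊥) ∧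
    (∀ P ∈ QPts K, P.rep ∈ Hyp → ∃ W ∈ S, P.rep ∈ W) :=
  statement_8_general q K hK L hL hpencil Hyp hHyp S hS
end

section
/- Let s, t ≥ 2 be integers and let Γ be a finite partial linear space in which every line is incident with exactly s+1 points and every point is incident with exactly t+1 lines, having exactly (s+1)(1+st+s²t²) points and (t+1)(1+st+s²t²) lines, and whose bipartite incidence graph contains no cycle of length less than 12 (i.e., Γ contains no ordinary k-gon for 2 ≤ k ≤ 5). Then Γ is a generalised hexagon of order (s,t): its incidence graph is connected with diameter 6 and girth 12. -/
open Sum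

namespace SimpleGraph

variable {V : Type*} {G : SimpleGraph V}

theorem Walk.IsPath.egirth_le_length_add_length {u v : V} {p q : G.Walk u v}
    (hp : p.IsPath) (hq : q.IsPath) (hne : p ≠ q) : G.egirth ≤ p.length + q.length := by
  obtain ⟨_, _, p', q', hp', hq', hc⟩ := hp.exists_isCycle_of_ne hq hne
  calc G.egirth ≤ (p'.append q'.reverse).length := egirth_le_length hc
    _ ≤ p.length + q.length := by
      rw [Walk.length_append, Walk.length_reverse]
      exact_mod_cast add_le_add (Walk.length_le_of_isSubwalk hp')
        (Walk.length_le_of_isSubwalk hq')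

theorem Walk.IsPath.eq_of_length_add_length_lt_egirth {u v : V} {p q : G.Walk u v}
    (hp : p.IsPath) (hq : q.IsPath) (h : (p.length + q.length : ℕ∞) < G.egirth) : p = q := by
  by_contra hne
  exact (hp.egirth_le_length_add_length hq hne).not_gt h

theorem Walk.IsPath.eq_snd_of_adj_of_mem_support {u v w : V} {p : G.Walk u v} (hp : p.IsPath)
    (hadj : G.Adj u w) (hw : w ∈ p.support) (h : (p.length + 1 : ℕ∞) < G.egirth) :
    w = p.snd := by
  classical
  have hle : ((p.takeUntil w hw).length + (Walk.cons hadj .nil).length : ℕ∞) < G.egirth :=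
    lt_of_le_of_lt (by simpa using p.length_takeUntil_le_length hw) h
  have htake := (hp.takeUntil hw).eq_of_length_add_length_lt_egirth
    (Walk.IsPath.nil.cons (by simpa using hadj.ne)) hle
  have h1 : (p.takeUntil w hw).length = 1 := by rw [htake]; rfl
  rw [← p.getVert_length_takeUntil hw, h1]

-- Paths are taken to end at `u` so that they grow at their start, where `Walk.cons` acts.
abbrev PathsTo (G : SimpleGraph V) (u : V) (k : ℕ) :=
  Σ v, {p : G.Walk v u // p.IsPath ∧ p.length = k}

def pathsToSuccEquiv (G : SimpleGraph V) (u : V) (k : ℕ) :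
    G.PathsTo u (k + 1) ≃ Σ q : G.PathsTo u k, {x // G.Adj q.1 x ∧ x ∉ q.2.1.support} where
  toFun
    | ⟨x, .cons h p, hp, hl⟩ => ⟨⟨_, p, hp.of_cons, by simpa using hl⟩, x, h.symm,
        ((Walk.cons_isPath_iff _ _).1 hp).2⟩
  invFun
    | ⟨⟨_, p, hp, hl⟩, x, h, hx⟩ => ⟨x, .cons h.symm p, hp.cons hx, by simp [hl]⟩
  left_inv := by rintro ⟨x, (_ | ⟨h, p⟩), hp, hl⟩ <;> simp at hl ⊢
  right_inv := by rintro ⟨⟨_, p, hp, hl⟩, x, h, hx⟩; rfl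

instance [Finite V] {u : V} {k : ℕ} : Finite (G.PathsTo u k) := by
  classical
  have := Fintype.ofFinite V
  infer_instance

lemma card_pathsTo_zero (u : V) : Nat.card (G.PathsTo u 0) = 1 := by
  refine Nat.card_eq_one_iff_unique.mpr ⟨⟨?_⟩, ⟨⟨u, .nil, .nil, rfl⟩⟩⟩
  rintro ⟨v, _ | _, hp, hl⟩ ⟨v', _ | _, hp', hl'⟩
  · rfl
  all_goals simp at hl hl'

lemma card_pathsTo_succ [Finite V] {u : V} {k D : ℕ}
    (hD : ∀ q : G.PathsTo u k, {x | G.Adj q.1 x ∧ x ∉ q.2.1.support}.ncard = D) :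
    Nat.card (G.PathsTo u (k + 1)) = Nat.card (G.PathsTo u k) * D := by
  have := Fintype.ofFinite (G.PathsTo u k)
  rw [Nat.card_congr (G.pathsToSuccEquiv u k), Nat.card_sigma]
  calc ∑ q : G.PathsTo u k, Nat.card {x // G.Adj q.1 x ∧ x ∉ q.2.1.support}
      = ∑ _ : G.PathsTo u k, D := Finset.sum_congr rfl fun q _ => hD q
    _ = Nat.card (G.PathsTo u k) * D := by simp [Nat.card_eq_fintype_card]

lemma card_pathsTo_one [Finite V] (u : V) :
    Nat.card (G.PathsTo u 1) = (G.neighborSet u).ncard := by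
  rw [card_pathsTo_succ (D := (G.neighborSet u).ncard), card_pathsTo_zero, one_mul]
  rintro ⟨v, _ | _, hp, hl⟩
  · congr 1
    ext x
    simpa using fun h => h.ne'
  · simp at hl

lemma Walk.IsPath.ncard_adj_notMem_support {u v : V} {p : G.Walk v u} (hp : p.IsPath)
    (hk : p.length ≠ 0) (h : (p.length + 1 : ℕ∞) < G.egirth) [Finite V] :
    {x | G.Adj v x ∧ x ∉ p.support}.ncard = (G.neighborSet v).ncard - 1 := by
  have hnil : ¬ p.Nil := by rwa [← Walk.length_eq_zero_iff]
  have : {x | G.Adj v x ∧ x ∉ p.support} = G.neighborSet v \ {p.snd} := by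
    ext x
    simp only [Set.mem_ofPred_eq, Set.mem_sdiff, mem_neighborSet, Set.mem_singleton_iff]
    refine and_congr_right fun hx => ⟨?_, ?_⟩
    · rintro hx' rfl
      exact hx' (List.mem_of_mem_tail (p.snd_mem_tail_support hnil))
    · exact fun hne hmem => hne (hp.eq_snd_of_adj_of_mem_support hx hmem h)
  rw [this, Set.ncard_sdiff_singleton_of_mem (by simpa using p.adj_snd hnil)]

lemma ncard_setOf_exists_isPath [Finite V] (u : V) {K : Finset ℕ} {n : ℕ}
    (hK : ∀ k ∈ K, k ≤ n) (hn : (2 * n : ℕ∞) < G.egirth) :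
    {v | ∃ p : G.Walk v u, p.IsPath ∧ p.length ∈ K}.ncard =
      ∑ k ∈ K, Nat.card (G.PathsTo u k) := by
  let start : (Σ k : K, G.PathsTo u k) → V := fun x => x.2.1
  have hinj : start.Injective := by
    rintro ⟨⟨k, hk⟩, v, p, hp, hl⟩ ⟨⟨k', hk'⟩, v', p', hp', hl'⟩ h
    obtain rfl : v = v' := h
    have hlen : (p.length + p'.length : ℕ∞) < G.egirth := by
      have := hK k hk
      have := hK k' hk'
      refine lt_of_le_of_lt ?_ hn
      exact_mod_cast (by simp only at hl hl'; omega : p.length + p'.length ≤ 2 * n)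
    obtain rfl := hp.eq_of_length_add_length_lt_egirth hp' hlen
    obtain rfl : k = k' := hl.symm.trans hl'
    rfl
  have hrange : Set.range start = {v | ∃ p : G.Walk v u, p.IsPath ∧ p.length ∈ K} := by
    ext v
    constructor
    · rintro ⟨⟨⟨k, hk⟩, v, p, hp, hl⟩, rfl⟩
      exact ⟨p, hp, by simp [hl, hk]⟩
    · rintro ⟨p, hp, hk⟩
      exact ⟨⟨⟨_, hk⟩, v, p, hp, rfl⟩, rfl⟩
  rw [← hrange, Set.ncard_range_of_injective hinj, Nat.card_sigma]
  exact Finset.sum_coe_sort K fun k => Nat.card (G.PathsTo u k)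

lemma egirth_le_of_adj_of_adj {u v x₁ x₂ : V} (h₁ : G.Adj u x₁) (h₂ : G.Adj u x₂)
    (hne : x₁ ≠ x₂) {q₁ : G.Walk x₁ v} {q₂ : G.Walk x₂ v} (hq₁ : q₁.IsPath) (hq₂ : q₂.IsPath)
    (hu₁ : u ∉ q₁.support) (hu₂ : u ∉ q₂.support) :
    G.egirth ≤ q₁.length + q₂.length + 2 := by
  have hne' : Walk.cons h₁ q₁ ≠ Walk.cons h₂ q₂ := by
    intro h
    cases h
    exact hne rfl
  calc G.egirth ≤ (Walk.cons h₁ q₁).length + (Walk.cons h₂ q₂).length :=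
        (hq₁.cons hu₁).egirth_le_length_add_length (hq₂.cons hu₂) hne'
    _ = q₁.length + q₂.length + 2 := by push_cast [Walk.length_cons]; ring

end SimpleGraph

open SimpleGraph

section IncGraph

variable {P L : Type*} {I : P → L → Prop}

@[simp] lemma incGraph_adj_inl_inr {p : P} {l : L} :
    (IncGraph I).Adj (inl p) (inr l) ↔ I p l := by
  simp [IncGraph]

@[simp] lemma incGraph_adj_inr_inl {p : P} {l : L} :
    (IncGraph I).Adj (inr l) (inl p) ↔ I p l := by
  simp [IncGraph]

@[simp] lemma not_incGraph_adj_inl_inl {p p' : P} : ¬ (IncGraph I).Adj (inl p) (inl p') := by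
  simp [IncGraph]

@[simp] lemma not_incGraph_adj_inr_inr {l l' : L} : ¬ (IncGraph I).Adj (inr l) (inr l') := by
  simp [IncGraph]

def incGraphColoring (I : P → L → Prop) : (IncGraph I).Coloring Bool :=
  Coloring.mk Sum.isLeft (by rintro (_ | _) (_ | _) h <;> simp_all)

lemma isLeft_iff_even_length {v w : P ⊕ L} (p : (IncGraph I).Walk v w) :
    (v.isLeft ↔ w.isLeft) ↔ Even p.length :=
  ((incGraphColoring I).even_length_iff_congr p).symm

lemma ncard_neighborSet_inl (p : P) :
    ((IncGraph I).neighborSet (inl p)).ncard = Nat.card {l // I p l} := by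
  have : (IncGraph I).neighborSet (inl p) =
      Set.range (fun l : {l // I p l} => (inr l.1 : P ⊕ L)) := by
    ext (_ | l) <;> simp
  rw [this, Set.ncard_range_of_injective fun _ _ h => Subtype.ext (inr_injective h)]

lemma ncard_neighborSet_inr (l : L) :
    ((IncGraph I).neighborSet (inr l)).ncard = Nat.card {p // I p l} := by
  have : (IncGraph I).neighborSet (inr l) =
      Set.range (fun p : {p // I p l} => (inl p.1 : P ⊕ L)) := by
    ext (p | _) <;> simp
  rw [this, Set.ncard_range_of_injective fun _ _ h => Subtype.ext (inl_injective h)]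

lemma ediam_incGraph_le {n : ℕ∞} (hP : ∀ p : P, Nonempty {l // I p l})
    (hL : ∀ l : L, Nonempty {p // I p l})
    (h : ∀ p l, (IncGraph I).edist (inl p) (inr l) ≤ n) : (IncGraph I).ediam ≤ n + 1 := by
  have hadj : ∀ {p l}, I p l → (IncGraph I).edist (inr l) (inl p) = 1 := fun hpl =>
    edist_eq_one_iff_adj.mpr (incGraph_adj_inr_inl.mpr hpl)
  refine ediam_le_of_edist_le ?_
  rintro (p | l) (p' | l')
  · obtain ⟨l', hl'⟩ := hP p'
    calc (IncGraph I).edist (inl p) (inl p')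
        ≤ (IncGraph I).edist (inl p) (inr l') + (IncGraph I).edist (inr l') (inl p') :=
          SimpleGraph.edist_triangle
      _ ≤ n + 1 := by rw [hadj hl']; grw [h p l']
  · exact (h p l').trans le_self_add
  · rw [SimpleGraph.edist_comm]
    exact (h p' l).trans le_self_add
  · obtain ⟨p, hp⟩ := hL l
    calc (IncGraph I).edist (inr l) (inr l')
        ≤ (IncGraph I).edist (inr l) (inl p) + (IncGraph I).edist (inl p) (inr l') :=
          SimpleGraph.edist_triangle
      _ ≤ n + 1 := by rw [hadj hp, add_comm]; grw [h p l']

lemma egirth_incGraph_le_twelve {p p₀ : P} (hp : 1 < Nat.card {l // I p l})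
    (hfar : ∀ w : (IncGraph I).Walk (inl p) (inl p₀), 6 ≤ w.length)
    (hfive : ∀ l, ∃ w : (IncGraph I).Walk (inr l) (inl p₀), w.IsPath ∧ w.length ≤ 5):
    (IncGraph I).egirth ≤ 12 := by
  classical
  have := Nat.finite_of_card_ne_zero (by omega : Nat.card {l // I p l} ≠ 0)
  obtain ⟨⟨l₁, h₁⟩, ⟨l₂, h₂⟩, hne⟩ := Finite.one_lt_card_iff_nontrivial.mp hp
  have havoid : ∀ l, ∃ w : (IncGraph I).Walk (inr l) (inl p₀),
      w.IsPath ∧ w.length ≤ 5 ∧ inl p ∉ w.support := by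
    intro l
    obtain ⟨w, hw, hl⟩ := hfive l
    refine ⟨w, hw, hl, fun hmem => ?_⟩
    have := hfar (w.dropUntil _ hmem)
    have := w.length_dropUntil_le_length hmem
    omega
  obtain ⟨w₁, hw₁, hl₁, hp₁⟩ := havoid l₁
  obtain ⟨w₂, hw₂, hl₂, hp₂⟩ := havoid l₂
  calc (IncGraph I).egirth ≤ w₁.length + w₂.length + 2 :=
        egirth_le_of_adj_of_adj (incGraph_adj_inl_inr.mpr h₁) (incGraph_adj_inl_inr.mpr h₂)
          (fun h => hne (Subtype.ext (inr_injective h))) hw₁ hw₂ hp₁ hp₂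
    _ ≤ 12 := mod_cast (by omega : w₁.length + w₂.length + 2 ≤ 12)

end IncGraph

section Order

variable {P L : Type*} {I : P → L → Prop} {s t : ℕ}

lemma ncard_neighborSet_incGraph (hline : ∀ l : L, Nat.card {p : P // I p l} = s + 1)
    (hpt : ∀ p : P, Nat.card {l : L // I p l} = t + 1) (v : P ⊕ L) :
    ((IncGraph I).neighborSet v).ncard = if v.isLeft then t + 1 else s + 1 := by
  rcases v with p | l
  · simp [ncard_neighborSet_inl, hpt]
  · simp [ncard_neighborSet_inr, hline]

variable [Finite P] [Finite L]

lemma card_pathsTo_incGraph_succ (hline : ∀ l : L, Nat.card {p : P // I p l} = s + 1)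
    (hpt : ∀ p : P, Nat.card {l : L // I p l} = t + 1) (p₀ : P) {k : ℕ} (hk : k ≠ 0)
    (hg : (k + 1 : ℕ∞) < (IncGraph I).egirth) :
    Nat.card ((IncGraph I).PathsTo (inl p₀) (k + 1)) =
      Nat.card ((IncGraph I).PathsTo (inl p₀) k) * if Even k then t else s := by
  refine card_pathsTo_succ fun ⟨v, p, hp, hl⟩ => ?_
  subst hl
  have hparity := isLeft_iff_even_length p
  simp only [isLeft_inl, iff_true] at hparity
  rw [hp.ncard_adj_notMem_support hk hg, ncard_neighborSet_incGraph hline hpt]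
  split_ifs <;> simp_all

lemma card_pathsTo_incGraph (hline : ∀ l : L, Nat.card {p : P // I p l} = s + 1)
    (hpt : ∀ p : P, Nat.card {l : L // I p l} = t + 1) (p₀ : P) :
    ∀ k : ℕ, (k + 1 : ℕ∞) < (IncGraph I).egirth →
      Nat.card ((IncGraph I).PathsTo (inl p₀) (k + 1)) = (t + 1) * s ^ ((k + 1) / 2) * t ^ (k / 2)
  | 0, _ => by simp [card_pathsTo_one, ncard_neighborSet_inl, hpt]
  | k + 1, hg => by
    rw [card_pathsTo_incGraph_succ hline hpt p₀ k.succ_ne_zero (mod_cast hg),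
      card_pathsTo_incGraph hline hpt p₀ k (lt_of_le_of_lt (by norm_num) hg)]
    rcases Nat.even_or_odd k with ⟨m, rfl⟩ | ⟨m, rfl⟩
    · rw [if_neg (by simp [parity_simps])]
      rw [show (m + m + 1) / 2 = m by omega, show (m + m + 1 + 1) / 2 = m + 1 by omega,
        show (m + m) / 2 = m by omega]
      ring
    · rw [if_pos (by simp [parity_simps])]
      rw [show (2 * m + 1 + 1) / 2 = m + 1 by omega, show (2 * m + 1 + 1 + 1) / 2 = m + 1 by omega,
        show (2 * m + 1) / 2 = m by omega]
      ring

end Order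

section Hexagon

variable {P L : Type*} [Fintype P] [Fintype L] {I : P → L → Prop} {s t : ℕ}

lemma exists_isPath_length_le_five (hline : ∀ l : L, Nat.card {p : P // I p l} = s + 1)
    (hpt : ∀ p : P, Nat.card {l : L // I p l} = t + 1)
    (hL : Fintype.card L = (t + 1) * (1 + s * t + s ^ 2 * t ^ 2))
    (hgirth : 12 ≤ (IncGraph I).egirth) (p₀ : P) (l : L) :
    ∃ w : (IncGraph I).Walk (inr l) (inl p₀), w.IsPath ∧ w.length ≤ 5 := by
  set S := {v | ∃ w : (IncGraph I).Walk v (inl p₀),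
    w.IsPath ∧ w.length ∈ ({1, 3, 5} : Finset ℕ)}
  have hcard : S.ncard = Nat.card L := by
    rw [ncard_setOf_exists_isPath _ (n := 5) (by decide) (lt_of_lt_of_le (by norm_num) hgirth)]
    have h1 := card_pathsTo_incGraph hline hpt p₀ 0 (lt_of_lt_of_le (by norm_num) hgirth)
    have h3 := card_pathsTo_incGraph hline hpt p₀ 2 (lt_of_lt_of_le (by norm_num) hgirth)
    have h5 := card_pathsTo_incGraph hline hpt p₀ 4 (lt_of_lt_of_le (by norm_num) hgirth)
    norm_num at h1 h3 h5
    rw [Nat.card_eq_fintype_card, hL, Finset.sum_insert (by decide), Finset.sum_insert (by decide),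
      Finset.sum_singleton, h1, h3, h5]
    ring
  have hS : S = Set.range inr := by
    refine Set.eq_of_subset_of_ncard_le ?_ ?_
    · rintro v ⟨w, -, hw⟩
      have hparity := isLeft_iff_even_length w
      simp only [isLeft_inl, iff_true] at hparity
      simp only [Finset.mem_insert, Finset.mem_singleton] at hw
      rcases v with p | l
      · rcases hw with h | h | h <;> simp [h, parity_simps] at hparity
      · exact ⟨l, rfl⟩
    · rw [Set.ncard_range_of_injective inr_injective, hcard]
  obtain ⟨w, hw, hl⟩ : inr l ∈ S := hS ▸ ⟨l, rfl⟩
  refine ⟨w, hw, ?_⟩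
  simp only [Finset.mem_insert, Finset.mem_singleton] at hl
  omega

lemma exists_forall_six_le_length (hs : 0 < s) (ht : 0 < t)
    (hline : ∀ l : L, Nat.card {p : P // I p l} = s + 1)
    (hpt : ∀ p : P, Nat.card {l : L // I p l} = t + 1)
    (hP : Fintype.card P = (s + 1) * (1 + s * t + s ^ 2 * t ^ 2))
    (hgirth : 12 ≤ (IncGraph I).egirth) (p₀ : P) :
    ∃ p : P, ∀ w : (IncGraph I).Walk (inl p) (inl p₀), 6 ≤ w.length := by
  set S := {v | ∃ w : (IncGraph I).Walk v (inl p₀),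
    w.IsPath ∧ w.length ∈ ({0, 2, 4} : Finset ℕ)}
  have hcard : S.ncard < Nat.card P := by
    rw [ncard_setOf_exists_isPath _ (n := 4) (by decide) (lt_of_lt_of_le (by norm_num) hgirth)]
    have h2 := card_pathsTo_incGraph hline hpt p₀ 1 (lt_of_lt_of_le (by norm_num) hgirth)
    have h4 := card_pathsTo_incGraph hline hpt p₀ 3 (lt_of_lt_of_le (by norm_num) hgirth)
    norm_num at h2 h4
    rw [Nat.card_eq_fintype_card, hP, Finset.sum_insert (by decide), Finset.sum_insert (by decide),
      Finset.sum_singleton, card_pathsTo_zero, h2, h4]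
    have : 0 < s ^ 3 * t ^ 2 := by positivity
    nlinarith
  obtain ⟨p, hp⟩ : ∃ p : P, inl p ∉ S := by
    by_contra! h
    have := Set.ncard_le_ncard (Set.range_subset_iff.mpr h)
    rw [Set.ncard_range_of_injective inl_injective] at this
    omega
  classical
  refine ⟨p, fun w => ?_⟩
  by_contra! hw
  have hparity := isLeft_iff_even_length w.bypass
  simp only [isLeft_inl, true_iff] at hparity
  have hle := w.length_bypass_le_length
  refine hp ⟨w.bypass, w.bypass_isPath, ?_⟩
  simp only [Finset.mem_insert, Finset.mem_singleton]
  obtain ⟨m, hm⟩ := hparity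
  omega

end Hexagon

theorem statement_11_general (s t : ℕ) (hs : 2 ≤ s) (ht : 2 ≤ t)
    (P L : Type) [Fintype P] [Fintype L] (I : P → L → Prop)
    (hline : ∀ l : L, Nat.card {p : P // I p l} = s + 1)
    (hpt : ∀ p : P, Nat.card {l : L // I p l} = t + 1)
    (hP : Fintype.card P = (s + 1) * (1 + s * t + s ^ 2 * t ^ 2))
    (hL : Fintype.card L = (t + 1) * (1 + s * t + s ^ 2 * t ^ 2))
    (hgirth : 12 ≤ (IncGraph I).egirth) :
    (IncGraph I).Connected ∧ (IncGraph I).diam = 6 ∧ (IncGraph I).girth = 12 := by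
  have hfive := exists_isPath_length_le_five hline hpt hL hgirth
  obtain ⟨p₀⟩ : Nonempty P := Fintype.card_pos_iff.mp (by rw [hP]; positivity)
  obtain ⟨p, hfar⟩ := exists_forall_six_le_length (by omega) (by omega) hline hpt hP hgirth p₀
  have hediam : (IncGraph I).ediam = 6 := by
    refine le_antisymm (ediam_incGraph_le (n := 5) ?_ ?_ fun p l => ?_) ?_
    · exact fun p => (Nat.card_ne_zero.mp (by simp [hpt])).1
    · exact fun l => (Nat.card_ne_zero.mp (by simp [hline])).1
    · obtain ⟨w, -, hw⟩ := hfive p l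
      rw [edist_comm]
      exact (edist_le w).trans (mod_cast hw)
    · calc (6 : ℕ∞) ≤ (IncGraph I).edist (inl p) (inl p₀) :=
            le_sInf fun _ ⟨w, hw⟩ => hw ▸ Nat.cast_le.mpr (hfar w)
        _ ≤ (IncGraph I).ediam := edist_le_ediam
  have hegirth : (IncGraph I).egirth = 12 :=
    le_antisymm (egirth_incGraph_le_twelve (by rw [hpt]; omega) hfar (hfive p₀)) hgirth
  have : Nonempty P := ⟨p₀⟩
  exact ⟨connected_of_ediam_ne_top (by simp [hediam]), by simp [diam, hediam],
    by simp [girth, hegirth]⟩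

/-- A finite partial linear space of order `(s,t)` with `(s+1)(1+st+s²t²)`
points, `(t+1)(1+st+s²t²)` lines and no ordinary `k`-gon for `2 ≤ k ≤ 5` (i.e. no cycle of
length `< 12` in the incidence graph) is a generalised hexagon of order `(s,t)`: its incidence
graph is connected with diameter `6` and girth `12`. -/
theorem statement_11 (s t : ℕ) (hs : 2 ≤ s) (ht : 2 ≤ t)
    (P L : Type) [Fintype P] [Fintype L] (I : P → L → Prop)
    (hpls : ∀ p₁ p₂ : P, p₁ ≠ p₂ → ∀ l₁ l₂ : L,
      I p₁ l₁ → I p₂ l₁ → I p₁ l₂ → I p₂ l₂ → l₁ = l₂)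
    (hline : ∀ l : L, Nat.card {p : P // I p l} = s + 1)
    (hpt : ∀ p : P, Nat.card {l : L // I p l} = t + 1)
    (hP : Fintype.card P = (s + 1) * (1 + s * t + s ^ 2 * t ^ 2))
    (hL : Fintype.card L = (t + 1) * (1 + s * t + s ^ 2 * t ^ 2))
    (hgirth : 12 ≤ (IncGraph I).egirth) :
    (IncGraph I).Connected ∧ (IncGraph I).diam = 6 ∧ (IncGraph I).girth = 12 :=
  statement_11_general s t hs ht P L I hline hpt hP hL hgirth
end

section
/- Let q be a prime power and let ω, δ ∈ GF(q²) with ω^{q+1} = −1 and δ·ω^q = δ^q·ω. Suppose that T(r·s^q·δ) + 2·s^{q+1}·δ^q·ω = 0 for all r, s ∈ GF(q²) satisfying r^{q+1} + s^{q+1} = 0, where T(x) = x + x^q. Then δ = 0. -/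
/-!
Put `a = ωδ`. For every `v` with `N(v) = 1` the pair `(ωv, 1)` is admissible, so the hypothesis
says that `T(av) = a v + a^q v^q` does not depend on `v` in the norm-one group `U`. Since
`v^q = v⁻¹` on `U`, this forces `a^q = a v` for every `v ≠ 1` in `U`; as `|U| = q + 1 ≥ 3`, two
different such `v` give `a = 0`, hence `δ = 0`.
-/

theorem FiniteField.exists_orderOf_eq_of_dvd {F : Type*} [Field F] [Fintype F] {n : ℕ}
    (hn : n ∣ Fintype.card F - 1) : ∃ u : F, orderOf u = n := by
  classical
  obtain ⟨g, hg⟩ := IsCyclic.exists_ofOrder_eq_natCard (α := Fˣ)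
  rw [Nat.card_eq_fintype_card, Fintype.card_units] at hg
  refine ⟨(g ^ (orderOf g / n) : Fˣ), ?_⟩
  rw [orderOf_units, orderOf_pow_orderOf_div (orderOf_pos g).ne' (hg ▸ hn)]

section NormOne

variable {K : Type*} [Field K] {n : ℕ} {a b u : K}

theorem eq_mul_of_mul_add_mul_pow_eq (hu : u ^ (n + 1) = 1) (hu1 : u ≠ 1)
    (h : a * u + b * u ^ n = a + b) : b = a * u := by
  have : (u - 1) * (a * u - b) = 0 := by linear_combination u * h - b * hu
  linear_combination -((mul_eq_zero.mp this).resolve_left (sub_ne_zero.mpr hu1))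

theorem eq_zero_of_mul_add_mul_pow_eq (hu : orderOf u = n + 1) (hn : 2 ≤ n)
    (h : ∀ v : K, v ^ (n + 1) = 1 → a * v + b * v ^ n = a + b) : a = 0 := by
  have hu_pow : u ^ (n + 1) = 1 := hu ▸ pow_orderOf_eq_one u
  have hu1 : u ≠ 1 := fun h1 => by rw [← orderOf_eq_one_iff] at h1; omega
  have hu2 : u ^ 2 ≠ 1 := fun h2 => by have := orderOf_le_of_pow_eq_one two_pos h2; omega
  have hu0 : u ≠ 0 := by rintro rfl; simp at hu_pow
  have hb₁ := eq_mul_of_mul_add_mul_pow_eq hu_pow hu1 (h u hu_pow)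
  have hu2_pow : (u ^ 2) ^ (n + 1) = 1 := by rw [← pow_mul, mul_comm, pow_mul, hu_pow, one_pow]
  have hb₂ := eq_mul_of_mul_add_mul_pow_eq hu2_pow hu2 (h _ hu2_pow)
  have : a * u * (u - 1) = 0 := by linear_combination hb₁ - hb₂
  simpa [hu0, sub_ne_zero.mpr hu1] using this

end NormOne

theorem statement_13_general (q : ℕ) (F : Type) [Field F] [Fintype F]
    (hF : Fintype.card F = q ^ 2)
    (ω δ : F) (hω : ω ^ (q + 1) = -1)
    (h : ∀ r s : F, r ^ (q + 1) + s ^ (q + 1) = 0 →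
      ((r * s ^ q * δ) + (r * s ^ q * δ) ^ q) + 2 * s ^ (q + 1) * δ ^ q * ω = 0) :
    δ = 0 := by
  have hq : 2 ≤ q := by
    have := Fintype.one_lt_card (α := F)
    rw [hF] at this
    nlinarith
  have hω0 : ω ≠ 0 := by rintro rfl; simp at hω
  obtain ⟨u, hu⟩ := FiniteField.exists_orderOf_eq_of_dvd (F := F) (n := q + 1)
    (by rw [hF, ← one_pow 2, Nat.sq_sub_sq]; exact dvd_mul_right _ _)
  have htrace : ∀ v : F, v ^ (q + 1) = 1 →
      ω * δ * v + (ω * δ) ^ q * v ^ q = ω * δ + (ω * δ) ^ q := by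
    intro v hv
    have h₁ := h ω 1 (by rw [hω, one_pow]; ring)
    have hv' := h (ω * v) 1 (by rw [mul_pow, hω, hv, one_pow]; ring)
    simp only [one_pow, mul_one] at h₁ hv'
    rw [show ω * v * δ = ω * δ * v by ring, mul_pow] at hv'
    linear_combination hv' - h₁
  have := eq_zero_of_mul_add_mul_pow_eq hu hq htrace
  simpa [hω0] using this

/-- If `ω^{q+1} = -1`, `δω^q = δ^qω` and
`T(rs^qδ) + 2 s^{q+1} δ^q ω = 0` for all `r, s` with `r^{q+1} + s^{q+1} = 0`, then `δ = 0`. -/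
theorem statement_13 (q : ℕ) (hq : IsPrimePow q) (F : Type) [Field F] [Fintype F]
    (hF : Fintype.card F = q ^ 2)
    (ω δ : F) (hω : ω ^ (q + 1) = -1) (hδ : δ * ω ^ q = δ ^ q * ω)
    (h : ∀ r s : F, r ^ (q + 1) + s ^ (q + 1) = 0 →
      ((r * s ^ q * δ) + (r * s ^ q * δ) ^ q) + 2 * s ^ (q + 1) * δ ^ q * ω = 0) :
    δ = 0 :=
  statement_13_general q F hF ω δ hω h
end
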